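/- arXiv:2108.13182 — 2 statements merged into one kernel-verified Lean document; each statement's English description precedes it below -/
import Mathlib

section
/- Let ψ, θ, φ : [0,∞) → [0,∞) where ψ is lower semi-continuous, non-decreasing, and ψ(t) = 0 iff t = 0; θ is upper semi-continuous with θ(0) = 0; φ is lower semi-continuous with φ(0) = 0; and ψ(t) - θ(t) + φ(t) > 0 for all t > 0. If (dₙ) is a sequence of nonnegative reals with ψ(dₙ₊₁) ≤ θ(dₙ) - φ(dₙ) for all n and (dₙ) converges to r ≥ 0, then r = 0. -/
theorem stmt6 (ψ θ φ : ℝ → ℝ)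
    (hψnn : ∀ t, 0 ≤ t → 0 ≤ ψ t) (hθnn : ∀ t, 0 ≤ t → 0 ≤ θ t)
    (hφnn : ∀ t, 0 ≤ t → 0 ≤ φ t)
    (hψlsc : LowerSemicontinuousOn ψ (Set.Ici 0))
    (hψmono : MonotoneOn ψ (Set.Ici 0))
    (hψzero : ∀ t, 0 ≤ t → (ψ t = 0 ↔ t = 0))
    (hθusc : UpperSemicontinuousOn θ (Set.Ici 0)) (hθ0 : θ 0 = 0)
    (hφlsc : LowerSemicontinuousOn φ (Set.Ici 0)) (hφ0 : φ 0 = 0)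
    (hpos : ∀ t, 0 < t → 0 < ψ t - θ t + φ t)
    (d : ℕ → ℝ) (hd : ∀ n, 0 ≤ d n)
    (hrec : ∀ n, ψ (d (n + 1)) ≤ θ (d n) - φ (d n))
    (r : ℝ) (hr : 0 ≤ r) (hlim : Filter.Tendsto d Filter.atTop (nhds r)) :
    r = 0 := by
  by_contra hr0
  have hrpos : 0 < r := lt_of_le_of_ne hr (Ne.symm hr0)
  have hεpos : 0 < (ψ r - θ r + φ r) / 3 := by have := hpos r hrpos; linarith
  set ε := (ψ r - θ r + φ r) / 3 with hε
  have hmem : r ∈ Set.Ici (0:ℝ) := hr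
  have hlim' : Filter.Tendsto d Filter.atTop (nhdsWithin r (Set.Ici 0)) :=
    tendsto_nhdsWithin_of_tendsto_nhds_of_eventually_within d hlim
      (Filter.Eventually.of_forall fun n => hd n)
  have hlim1 : Filter.Tendsto (fun n => d (n + 1)) Filter.atTop (nhdsWithin r (Set.Ici 0)) :=
    hlim'.comp (Filter.tendsto_add_atTop_nat 1)
  have h1 : ∀ᶠ n in Filter.atTop, ψ r - ε < ψ (d (n + 1)) :=
    hlim1.eventually ((hψlsc r hmem) (ψ r - ε) (by linarith))
  have h2 : ∀ᶠ n in Filter.atTop, θ (d n) < θ r + ε :=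
    hlim'.eventually ((hθusc r hmem) (θ r + ε) (by linarith))
  have h3 : ∀ᶠ n in Filter.atTop, φ r - ε < φ (d n) :=
    hlim'.eventually ((hφlsc r hmem) (φ r - ε) (by linarith))
  obtain ⟨n, ha, hb, hc⟩ := (h1.and (h2.and h3)).exists
  have := hrec n
  linarith
end

section
/- Let 0 < α < 1, t₀ ∈ ℝ, and g : [t₀, t₀+a] → ℝ measurable with |g(s)| ≤ H for all s. Define F(t) = (1/Γ(α)) ∫_{t₀}^{t} (t-s)^{α-1} g(s) ds. Then for all t₁ < t₂ in [t₀, t₀+a], |F(t₁) - F(t₂)| ≤ (H/Γ(α+1))·(|(t₂-t₀)^α - (t₁-t₀)^α + (t₂-t₁)^α| + (t₂-t₁)^α). -/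
open MeasureTheory intervalIntegral Set

lemma intervalIntegrable_sub_rpow {r : ℝ} (hr : -1 < r) (e c d : ℝ) :
    IntervalIntegrable (fun s => (e - s) ^ r) volume c d := by
  simpa using (intervalIntegrable_rpow' (a := e - c) (b := e - d) hr).comp_sub_left e

lemma integral_sub_rpow {α : ℝ} (hα : 0 < α) (e c d : ℝ) :
    ∫ s in c..d, (e - s) ^ (α - 1) = ((e - c) ^ α - (e - d) ^ α) / α := by
  rw [integral_comp_sub_left (fun x : ℝ => x ^ (α - 1)) e,
    integral_rpow (Or.inl (by linarith)), sub_add_cancel]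

lemma IntervalIntegrable.mul_of_abs_le {k g : ℝ → ℝ} {c d H : ℝ}
    (hk : IntervalIntegrable k volume c d) (hcd : c ≤ d) (hg : AEStronglyMeasurable g)
    (hgH : ∀ s ∈ Icc c d, |g s| ≤ H) :
    IntervalIntegrable (fun s => k s * g s) volume c d := by
  rw [intervalIntegrable_iff_integrableOn_Ioc_of_le hcd] at hk ⊢
  exact hk.mul_bdd hg.restrict
    (ae_restrict_of_forall_mem measurableSet_Ioc fun s hs => hgH s (Ioc_subset_Icc_self hs))

lemma abs_integral_mul_le_of_abs_le {k g : ℝ → ℝ} {c d H : ℝ} (hcd : c ≤ d)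
    (hk : IntervalIntegrable k volume c d) (hk0 : ∀ s ∈ Ioo c d, 0 ≤ k s)
    (hgH : ∀ s ∈ Icc c d, |g s| ≤ H) :
    |∫ s in c..d, k s * g s| ≤ H * ∫ s in c..d, k s := by
  rw [← Real.norm_eq_abs, ← intervalIntegral.integral_const_mul]
  refine intervalIntegral.norm_integral_le_of_norm_le hcd ?_ (hk.const_mul H)
  filter_upwards [volume.ae_ne d] with s hsd hs
  have hks : 0 ≤ k s := hk0 s ⟨hs.1, lt_of_le_of_ne hs.2 hsd⟩
  rw [Real.norm_eq_abs, abs_mul, abs_of_nonneg hks, mul_comm H]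
  exact mul_le_mul_of_nonneg_left (hgH s (Ioc_subset_Icc_self hs)) hks

/-- For `α ≤ 1` the kernel `(t - s) ^ (α - 1)` decreases in `t`, so on `[t₀, t₁]` the difference
of the two kernels has a sign and integrates exactly. -/
lemma abs_integral_rpow_kernel_sub_le {α t₀ t₁ t₂ H : ℝ} {g : ℝ → ℝ} (hα : 0 < α) (hα1 : α ≤ 1)
    (hg : AEStronglyMeasurable g) (hgH : ∀ s ∈ Icc t₀ t₂, |g s| ≤ H)
    (h01 : t₀ ≤ t₁) (h12 : t₁ ≤ t₂) :
    |(∫ s in t₀..t₁, (t₁ - s) ^ (α - 1) * g s) - ∫ s in t₀..t₂, (t₂ - s) ^ (α - 1) * g s| ≤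
      H / α * ((t₁ - t₀) ^ α - (t₂ - t₀) ^ α + (t₂ - t₁) ^ α + (t₂ - t₁) ^ α) := by
  have hk (e c d : ℝ) : IntervalIntegrable (fun s => (e - s) ^ (α - 1)) volume c d :=
    intervalIntegrable_sub_rpow (by linarith) e c d
  have hint {e c d : ℝ} (hc : t₀ ≤ c) (hcd : c ≤ d) (hd : d ≤ t₂) :
      IntervalIntegrable (fun s => (e - s) ^ (α - 1) * g s) volume c d :=
    (hk e c d).mul_of_abs_le hcd hg fun s hs => hgH s ⟨hc.trans hs.1, hs.2.trans hd⟩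
  have hsplit : (∫ s in t₀..t₁, (t₁ - s) ^ (α - 1) * g s)
        - ∫ s in t₀..t₂, (t₂ - s) ^ (α - 1) * g s
      = (∫ s in t₀..t₁, ((t₁ - s) ^ (α - 1) - (t₂ - s) ^ (α - 1)) * g s)
        - ∫ s in t₁..t₂, (t₂ - s) ^ (α - 1) * g s := by
    simp only [sub_mul]
    rw [← integral_add_adjacent_intervals (hint le_rfl h01 h12) (hint h01 h12 le_rfl),
      integral_sub (hint le_rfl h01 h12) (hint le_rfl h01 h12)]
    ring
  have hnear : |∫ s in t₀..t₁, ((t₁ - s) ^ (α - 1) - (t₂ - s) ^ (α - 1)) * g s| ≤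
      H * (((t₁ - t₀) ^ α - (t₂ - t₀) ^ α + (t₂ - t₁) ^ α) / α) := by
    refine (abs_integral_mul_le_of_abs_le h01 ((hk _ _ _).sub (hk _ _ _))
      (fun s hs => sub_nonneg.2 <| Real.rpow_le_rpow_of_nonpos (by linarith [hs.2])
        (by linarith) (by linarith))
      fun s hs => hgH s ⟨hs.1, hs.2.trans h12⟩).trans_eq ?_
    rw [integral_sub (hk _ _ _) (hk _ _ _), integral_sub_rpow hα, integral_sub_rpow hα, sub_self,
      Real.zero_rpow hα.ne']
    ring
  have htail : |∫ s in t₁..t₂, (t₂ - s) ^ (α - 1) * g s| ≤ H * ((t₂ - t₁) ^ α / α) := by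
    refine (abs_integral_mul_le_of_abs_le h12 (hk _ _ _)
      (fun s hs => Real.rpow_nonneg (by linarith [hs.2]) _)
      fun s hs => hgH s ⟨h01.trans hs.1, hs.2⟩).trans_eq ?_
    rw [integral_sub_rpow hα, sub_self, Real.zero_rpow hα.ne', sub_zero]
  rw [hsplit]
  calc _ ≤ _ := abs_sub _ _
    _ ≤ _ := add_le_add hnear htail
    _ = _ := by ring

theorem stmt10_general (t₀ a α H : ℝ) (hα : 0 < α) (hα1 : α < 1)
    (g : ℝ → ℝ) (hg : Measurable g)
    (hbound : ∀ s ∈ Set.Icc t₀ (t₀ + a), |g s| ≤ H)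
    (F : ℝ → ℝ)
    (hF : ∀ t, F t = (1 / Real.Gamma α) * ∫ s in t₀..t, (t - s) ^ (α - 1) * g s) :
    ∀ t₁ ∈ Set.Icc t₀ (t₀ + a), ∀ t₂ ∈ Set.Icc t₀ (t₀ + a), t₁ < t₂ →
      |F t₁ - F t₂| ≤ (H / Real.Gamma (α + 1)) *
        (|(t₂ - t₀) ^ α - (t₁ - t₀) ^ α + (t₂ - t₁) ^ α| + (t₂ - t₁) ^ α) := by
  rintro t₁ ⟨h01, -⟩ t₂ ⟨-, h2a⟩ h12
  have hgH : ∀ s ∈ Icc t₀ t₂, |g s| ≤ H := fun s hs => hbound s ⟨hs.1, hs.2.trans h2a⟩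
  have hH : 0 ≤ H := (abs_nonneg _).trans (hgH t₀ ⟨le_rfl, by linarith⟩)
  have hmono : (t₁ - t₀) ^ α ≤ (t₂ - t₀) ^ α :=
    Real.rpow_le_rpow (by linarith) (by linarith) hα.le
  have hΓ : 0 < Real.Gamma α := Real.Gamma_pos_of_pos hα
  rw [hF, hF, ← mul_sub, abs_mul, abs_of_pos (one_div_pos.2 hΓ), Real.Gamma_add_one hα.ne']
  calc 1 / Real.Gamma α * |_ - _|
      ≤ 1 / Real.Gamma α * (H / α * ((t₁ - t₀) ^ α - (t₂ - t₀) ^ α + (t₂ - t₁) ^ α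
          + (t₂ - t₁) ^ α)) := by
        gcongr
        exact abs_integral_rpow_kernel_sub_le hα hα1.le hg.aestronglyMeasurable hgH h01 h12.le
    _ ≤ H / (α * Real.Gamma α) *
        (|(t₂ - t₀) ^ α - (t₁ - t₀) ^ α + (t₂ - t₁) ^ α| + (t₂ - t₁) ^ α) := by
        rw [← mul_assoc, div_mul_div_comm, one_mul, mul_comm (Real.Gamma α)]
        gcongr
        linarith [le_abs_self ((t₂ - t₀) ^ α - (t₁ - t₀) ^ α + (t₂ - t₁) ^ α)]

theorem stmt10 (t₀ a α H : ℝ) (ha : 0 < a) (hα : 0 < α) (hα1 : α < 1)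
    (g : ℝ → ℝ) (hg : Measurable g)
    (hbound : ∀ s ∈ Set.Icc t₀ (t₀ + a), |g s| ≤ H)
    (F : ℝ → ℝ)
    (hF : ∀ t, F t = (1 / Real.Gamma α) * ∫ s in t₀..t, (t - s) ^ (α - 1) * g s) :
    ∀ t₁ ∈ Set.Icc t₀ (t₀ + a), ∀ t₂ ∈ Set.Icc t₀ (t₀ + a), t₁ < t₂ →
      |F t₁ - F t₂| ≤ (H / Real.Gamma (α + 1)) *
        (|(t₂ - t₀) ^ α - (t₁ - t₀) ^ α + (t₂ - t₁) ^ α| + (t₂ - t₁) ^ α) :=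
  stmt10_general t₀ a α H hα hα1 g hg hbound F hF
end
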